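/- Splitting diagonal preconditioner bound: Let K₁, …, K_l be real matrices with K_k ∈ ℝ^{m_k×n}, and α ∈ [0,2]. Define T = diag(τ) with τ_j = 1/(Σ_{k=1}^l Σ_{i=1}^{m_k} |K_k(i,j)|^{2−α}) and Σ_k = diag(σ^k) with σ^k_i = 1/(Σ_{j=1}^n |K_k(i,j)|^α) (assuming these sums positive). Let K̃ be the stacked matrix (K₁; …; K_l) and Σ̃ = diag(Σ₁, …, Σ_l). Then ‖Σ̃^{1/2} K̃ T^{1/2}‖² ≤ 1. -/

import Mathlib

/-!
A Schur test. Write `r i = ∑ⱼ |A i j|^p` and `c j = ∑ᵢ |A i j|^q` with `p + q = 2`. Splitting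
`|A i j| = |A i j|^(p/2) · |A i j|^(q/2)` and applying Cauchy–Schwarz to each row gives
`(∑ⱼ A i j yⱼ)² ≤ r i · ∑ⱼ |A i j|^q yⱼ²`; the row weight `1 / r i` cancels `r i`, and after
summing over `i` the column weight `1 / c j` cancels `c j`. A vanishing sum has weight
`1 / 0 = 0`, so each cancellation is the inequality `r⁻¹ * r ≤ 1`.
-/

lemma Real.rpow_div_two_mul_rpow_div_two {a p q : ℝ} (ha : 0 ≤ a) (hpq : p + q = 2) :
    a ^ (p / 2) * a ^ (q / 2) = a := by
  have hsum : p / 2 + q / 2 = 1 := by linarith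
  rw [← Real.rpow_add' ha (by rw [hsum]; exact one_ne_zero), hsum, Real.rpow_one]

lemma Real.rpow_div_two_sq {a : ℝ} (ha : 0 ≤ a) (p : ℝ) : (a ^ (p / 2)) ^ 2 = a ^ p := by
  rw [← Real.rpow_natCast, ← Real.rpow_mul ha]
  norm_num

lemma sq_sum_mul_le_sum_rpow_mul_sum_rpow_mul_sq {κ : Type*} (s : Finset κ) (a y : κ → ℝ)
    {p q : ℝ} (hpq : p + q = 2) :
    (∑ j ∈ s, a j * y j) ^ 2 ≤ (∑ j ∈ s, |a j| ^ p) * ∑ j ∈ s, |a j| ^ q * y j ^ 2 := by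
  have hsplit : ∀ j, |a j * y j| = |a j| ^ (p / 2) * (|a j| ^ (q / 2) * |y j|) := fun j => by
    rw [← mul_assoc, Real.rpow_div_two_mul_rpow_div_two (abs_nonneg _) hpq, abs_mul]
  calc (∑ j ∈ s, a j * y j) ^ 2
      ≤ (∑ j ∈ s, |a j * y j|) ^ 2 := by
        rw [← sq_abs]
        exact pow_le_pow_left₀ (abs_nonneg _) (Finset.abs_sum_le_sum_abs _ _) 2
    _ = (∑ j ∈ s, |a j| ^ (p / 2) * (|a j| ^ (q / 2) * |y j|)) ^ 2 := by simp only [hsplit]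
    _ ≤ (∑ j ∈ s, (|a j| ^ (p / 2)) ^ 2) * ∑ j ∈ s, (|a j| ^ (q / 2) * |y j|) ^ 2 :=
        Finset.sum_mul_sq_le_sq_mul_sq _ _ _
    _ = (∑ j ∈ s, |a j| ^ p) * ∑ j ∈ s, |a j| ^ q * y j ^ 2 := by
        simp only [mul_pow, sq_abs, Real.rpow_div_two_sq (abs_nonneg _)]

theorem Matrix.sum_sq_mulVec_rpow_scaled_le {ι κ : Type*} [Fintype ι] [Fintype κ]
    (A : Matrix ι κ ℝ) {p q : ℝ} (hpq : p + q = 2) (x : κ → ℝ) :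
    ∑ i, ((Matrix.of fun i j => Real.sqrt (1 / ∑ j', |A i j'| ^ p) * A i j *
        Real.sqrt (1 / ∑ i', |A i' j| ^ q)).mulVec x i) ^ 2 ≤ ∑ j, x j ^ 2 := by
  set r : ι → ℝ := fun i => ∑ j, |A i j| ^ p
  set c : κ → ℝ := fun j => ∑ i, |A i j| ^ q
  have hr : ∀ i, 0 ≤ r i := fun i => Finset.sum_nonneg fun j _ => by positivity
  have hc : ∀ j, 0 ≤ c j := fun j => Finset.sum_nonneg fun i _ => by positivity
  set y : κ → ℝ := fun j => Real.sqrt (1 / c j) * x j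
  have hrow : ∀ i, ((Matrix.of fun i j => Real.sqrt (1 / r i) * A i j *
      Real.sqrt (1 / c j)).mulVec x i) ^ 2 ≤ ∑ j, |A i j| ^ q * y j ^ 2 := fun i => by
    have hcs := sq_sum_mul_le_sum_rpow_mul_sum_rpow_mul_sq Finset.univ (A i) y hpq
    calc _ = (Real.sqrt (1 / r i) * ∑ j, A i j * y j) ^ 2 := by
          simp only [Matrix.mulVec, dotProduct, Matrix.of_apply, y, Finset.mul_sum]
          congr 1
          exact Finset.sum_congr rfl fun j _ => by ring
      _ = (r i)⁻¹ * (∑ j, A i j * y j) ^ 2 := by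
          rw [mul_pow, Real.sq_sqrt (by positivity [hr i]), one_div]
      _ ≤ (r i)⁻¹ * r i * ∑ j, |A i j| ^ q * y j ^ 2 := by
          rw [mul_assoc]
          exact mul_le_mul_of_nonneg_left hcs (inv_nonneg.mpr (hr i))
      _ ≤ ∑ j, |A i j| ^ q * y j ^ 2 :=
          mul_le_of_le_one_left (Finset.sum_nonneg fun j _ => by positivity)
            (inv_mul_le_one_of_le₀ le_rfl (hr i))
  calc _ ≤ ∑ i, ∑ j, |A i j| ^ q * y j ^ 2 := Finset.sum_le_sum fun i _ => hrow i
    _ = ∑ j, c j * (c j)⁻¹ * x j ^ 2 := by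
        rw [Finset.sum_comm]
        refine Finset.sum_congr rfl fun j _ => ?_
        rw [mul_assoc, ← Finset.sum_mul]
        simp only [y, mul_pow]
        rw [Real.sq_sqrt (by positivity [hc j]), one_div]
    _ ≤ ∑ j, x j ^ 2 := Finset.sum_le_sum fun j _ =>
        mul_le_of_le_one_left (sq_nonneg _) (mul_inv_le_one_of_le₀ le_rfl (hc j))

theorem splitting_diag_preconditioner_bound_general {l n : ℕ} {m : Fin l → ℕ}
    (K : ∀ k : Fin l, Matrix (Fin (m k)) (Fin n) ℝ)
    (α : ℝ) :
    ∀ x : Fin n → ℝ,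
      ∑ s : (k : Fin l) × Fin (m k),
        ((Matrix.of fun (s : (k : Fin l) × Fin (m k)) j =>
            Real.sqrt (1 / ∑ j', |K s.1 s.2 j'| ^ α) * K s.1 s.2 j *
              Real.sqrt (1 / ∑ k, ∑ i', |K k i' j| ^ (2 - α))).mulVec x s) ^ 2
        ≤ ∑ j, (x j) ^ 2 := by
  intro x
  have h := Matrix.sum_sq_mulVec_rpow_scaled_le
    (Matrix.of fun (s : (k : Fin l) × Fin (m k)) j => K s.1 s.2 j) (p := α) (q := 2 - α) (by ring) x
  simpa only [Matrix.of_apply, Fintype.sum_sigma] using h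

/-- Splitting diagonal preconditioner bound: with
`τ_j = 1/(Σ_k Σ_i |K_k(i,j)|^{2−α})` and `σ^k_i = 1/(Σ_j |K_k(i,j)|^α)`,
the stacked matrix `K̃ = (K₁; …; K_l)` satisfies
`‖Σ̃^{1/2} K̃ T^{1/2} x‖² ≤ ‖x‖²` for every `x`, i.e. `‖Σ̃^{1/2} K̃ T^{1/2}‖² ≤ 1`. -/
theorem splitting_diag_preconditioner_bound {l n : ℕ} {m : Fin l → ℕ}
    (K : ∀ k : Fin l, Matrix (Fin (m k)) (Fin n) ℝ)
    (α : ℝ) (hα0 : 0 ≤ α) (hα2 : α ≤ 2)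
    (hcol : ∀ j, 0 < ∑ k, ∑ i, |K k i j| ^ (2 - α))
    (hrow : ∀ k, ∀ i, 0 < ∑ j, |K k i j| ^ α) :
    ∀ x : Fin n → ℝ,
      ∑ s : (k : Fin l) × Fin (m k),
        ((Matrix.of fun (s : (k : Fin l) × Fin (m k)) j =>
            Real.sqrt (1 / ∑ j', |K s.1 s.2 j'| ^ α) * K s.1 s.2 j *
              Real.sqrt (1 / ∑ k, ∑ i', |K k i' j| ^ (2 - α))).mulVec x s) ^ 2
        ≤ ∑ j, (x j) ^ 2 :=
  splitting_diag_preconditioner_bound_general K α
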